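/- arXiv:2008.08047 — 6 statements merged into one kernel-verified Lean document; each statement's English description precedes it below -/
import Mathlib

section
/- For every natural number n ≥ 1 and every vector λ ∈ ℝⁿ, one has Σ_{i=1}^n (cosh(λ_i) − 1) ≤ cosh(‖λ‖) − 1, where ‖λ‖ = √(Σ_{i=1}^n λ_i²) is the Euclidean norm. -/
open scoped Nat

lemma aux_sum_pow_le {n : ℕ} (f : Fin n → ℝ) (hf : ∀ i, 0 ≤ f i) (k : ℕ) :
    ∑ i, f i ^ (k + 1) ≤ (∑ i, f i) ^ (k + 1) := by
  have hS : ∀ i, f i ≤ ∑ j, f j := fun i =>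
    Finset.single_le_sum (fun j _ => hf j) (Finset.mem_univ i)
  calc ∑ i, f i ^ (k + 1) = ∑ i, f i * f i ^ k := by
        simp [pow_succ, mul_comm]
    _ ≤ ∑ i, f i * (∑ j, f j) ^ k := by
        refine Finset.sum_le_sum fun i _ => ?_
        exact mul_le_mul_of_nonneg_left (pow_le_pow_left₀ (hf i) (hS i) k) (hf i)
    _ = (∑ i, f i) ^ (k + 1) := by
        rw [← Finset.sum_mul, pow_succ, mul_comm]

lemma hasSum_cosh_sub_one (r : ℝ) :
    HasSum (fun k : ℕ => r ^ (2 * (k + 1)) / ((2 * (k + 1))! : ℝ)) (Real.cosh r - 1) := by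
  refine (hasSum_nat_add_iff (f := fun n => r ^ (2 * n) / ((2 * n)! : ℝ)) 1).2 ?_
  simpa using Real.hasSum_cosh r

/-- For every `n ≥ 1` and every vector `l ∈ ℝⁿ`,
`∑ i, (cosh (l i) - 1) ≤ cosh ‖l‖ - 1` where `‖l‖` is the Euclidean norm. -/
theorem sum_cosh_sub_one_le_cosh_norm_sub_one
    (n : ℕ) (hn : 1 ≤ n) (l : Fin n → ℝ) :
    ∑ i, (Real.cosh (l i) - 1) ≤
      Real.cosh (Real.sqrt (∑ i, (l i) ^ 2)) - 1 := by
  set s : ℝ := ∑ i, (l i) ^ 2 with hs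
  have hs0 : 0 ≤ s := Finset.sum_nonneg fun i _ => sq_nonneg _
  have hsq : Real.sqrt s ^ 2 = s := Real.sq_sqrt hs0
  have hL : HasSum (fun k : ℕ => ∑ i, (l i) ^ (2 * (k + 1)) / ((2 * (k + 1))! : ℝ))
      (∑ i, (Real.cosh (l i) - 1)) :=
    hasSum_sum (fun i _ => hasSum_cosh_sub_one (l i))
  have hR : HasSum (fun k : ℕ => s ^ (k + 1) / ((2 * (k + 1))! : ℝ))
      (Real.cosh (Real.sqrt s) - 1) := by
    have := hasSum_cosh_sub_one (Real.sqrt s)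
    simpa [pow_mul, hsq] using this
  refine hasSum_le (fun k => ?_) hL hR
  have : ∑ i, (l i) ^ (2 * (k + 1)) ≤ s ^ (k + 1) := by
    calc ∑ i, (l i) ^ (2 * (k + 1)) = ∑ i, ((l i) ^ 2) ^ (k + 1) := by
          simp [← pow_mul]
      _ ≤ (∑ i, (l i) ^ 2) ^ (k + 1) :=
          aux_sum_pow_le (fun i => (l i) ^ 2) (fun i => sq_nonneg _) k
  rw [← Finset.sum_div]
  exact div_le_div_of_nonneg_right this (by positivity) |>.trans_eq rfl
end

section
/- For every real number c, cosh(√2 · c) − 1 ≥ 2 · (cosh(c) − 1). -/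
open Nat

namespace Real

theorem hasSum_cosh_sub_one (x : ℝ) :
    HasSum (fun n ↦ x ^ (2 * (n + 1)) / ↑(2 * (n + 1))!) (cosh x - 1) := by
  simpa using (hasSum_nat_add_iff' 1).mpr (hasSum_cosh x)

theorem sq_mul_cosh_sub_one_le_cosh_mul_sub_one {a : ℝ} (ha : 1 ≤ |a|) (x : ℝ) :
    a ^ 2 * (cosh x - 1) ≤ cosh (a * x) - 1 := by
  have ha2 : 1 ≤ a ^ 2 := (one_le_sq_iff_one_le_abs a).mpr ha
  -- Termwise: the `n`-th coefficient for `a * x` is `(a ^ 2) ^ (n + 1) ≥ a ^ 2` times the one for `x`.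
  refine hasSum_le (fun n ↦ ?_) ((hasSum_cosh_sub_one x).mul_left (a ^ 2))
    (hasSum_cosh_sub_one (a * x))
  rw [mul_pow, pow_mul a, mul_div_assoc]
  gcongr
  · exact div_nonneg ((even_two_mul _).pow_nonneg x) (cast_nonneg _)
  · exact le_self_pow₀ ha2 (succ_ne_zero n)

end Real

/-- For every real `c`, `cosh (√2 * c) - 1 ≥ 2 * (cosh c - 1)`. -/
theorem cosh_sqrt_two_mul_sub_one_ge (c : ℝ) :
    Real.cosh (Real.sqrt 2 * c) - 1 ≥ 2 * (Real.cosh c - 1) := by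
  have h1 : 1 ≤ |Real.sqrt 2| := by
    rw [abs_of_nonneg (Real.sqrt_nonneg 2)]
    exact Real.one_le_sqrt.mpr one_le_two
  have h := Real.sq_mul_cosh_sub_one_le_cosh_mul_sub_one h1 c
  rwa [Real.sq_sqrt zero_le_two] at h
end

section
/- Let L be a linear subspace of the space of symmetric n×n real matrices, with orthogonal complement L^⊥ relative to the trace inner product ⟨A,B⟩ = tr(A·B). Let X and Y be symmetric positive definite n×n matrices and k > 0 a real number such that X − k·Y ∈ L and X⁻¹ − k·Y⁻¹ ∈ L^⊥. Then tr(X·Y⁻¹) + tr(X⁻¹·Y) = n·(k + 1/k); equivalently, the divergence satisfies h(X, Y) = 2n·(cosh(log k) − 1). -/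
open Matrix

/-- If `L` is a subspace of symmetric matrices with orthogonal complement `Lp`
(relative to the trace inner product), `X, Y` are symmetric positive definite,
`k > 0`, `X - k•Y ∈ L` and `X⁻¹ - k•Y⁻¹ ∈ Lp`, then
`tr (X * Y⁻¹) + tr (X⁻¹ * Y) = n * (k + 1/k)`; equivalently the divergence
`h(X, Y) = 2 n (cosh (log k) - 1)`. -/
theorem divergence_on_central_path
    (n : ℕ) (hn : 1 ≤ n)
    (L : Submodule ℝ (Matrix (Fin n) (Fin n) ℝ))
    (hL : ∀ A ∈ L, A.IsHermitian)
    (Lp : Submodule ℝ (Matrix (Fin n) (Fin n) ℝ))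
    (hLp : ∀ B, B ∈ Lp ↔ (B.IsHermitian ∧ ∀ A ∈ L, (A * B).trace = 0))
    (X Y : Matrix (Fin n) (Fin n) ℝ) (hX : X.PosDef) (hY : Y.PosDef)
    (k : ℝ) (hk : 0 < k)
    (hmemL : X - k • Y ∈ L) (hmemLp : X⁻¹ - k • Y⁻¹ ∈ Lp) :
    (X * Y⁻¹).trace + (X⁻¹ * Y).trace = n * (k + 1 / k) ∧
      (X * Y⁻¹).trace + (X⁻¹ * Y).trace - 2 * n =
        2 * n * (Real.cosh (Real.log k) - 1) := by
  have hXdet : IsUnit X.det := isUnit_iff_ne_zero.mpr (ne_of_gt hX.det_pos)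
  have hYdet : IsUnit Y.det := isUnit_iff_ne_zero.mpr (ne_of_gt hY.det_pos)
  have hXinv : X * X⁻¹ = 1 := Matrix.mul_nonsing_inv X hXdet
  have hYinv : Y * Y⁻¹ = 1 := Matrix.mul_nonsing_inv Y hYdet
  have h0 : ((X - k • Y) * (X⁻¹ - k • Y⁻¹)).trace = 0 :=
    ((hLp _).mp hmemLp).2 _ hmemL
  have hexp : ((X - k • Y) * (X⁻¹ - k • Y⁻¹)).trace
      = (n : ℝ) - k * (X * Y⁻¹).trace - k * (X⁻¹ * Y).trace + k * k * (n : ℝ) := by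
    have h1 : (Y * X⁻¹).trace = (X⁻¹ * Y).trace := Matrix.trace_mul_comm Y X⁻¹
    rw [sub_mul, mul_sub, mul_sub, smul_mul_assoc, smul_mul_assoc, mul_smul_comm,
      mul_smul_comm, hXinv, hYinv]
    simp [Matrix.trace_sub, Matrix.trace_smul, h1, smul_smul]
    ring
  have key : (X * Y⁻¹).trace + (X⁻¹ * Y).trace = n * (k + 1 / k) := by
    rw [hexp] at h0
    have hk' : k ≠ 0 := ne_of_gt hk
    field_simp at h0 ⊢
    nlinarith [h0]
  refine ⟨key, ?_⟩
  have hcosh : Real.cosh (Real.log k) = (k + 1 / k) / 2 := by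
    rw [Real.cosh_eq, Real.exp_log hk, Real.exp_neg, Real.exp_log hk, one_div]
  rw [key, hcosh]
  ring
end

section
/- Let f : ℝ → ℝ be twice differentiable and convex on [0, ∞) with f(u) ≥ 0 for all u ≥ 0 and f′(0) < 0, and let a, b ≥ 0 be constants with a·f(0) + b > 0 such that f″(u) ≤ a·f(u) + b for all u ≥ 0. Then f(t) ≤ f(0) for every t with 0 ≤ t ≤ −2·f′(0) / (a·f(0) + b). -/
open Set Filter Topology

/-- Descent condition: if `f` is twice differentiable and convex on `[0,∞)`,
nonnegative there, with `f'(0) < 0`, and `a, b ≥ 0` satisfy `a f(0) + b > 0`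
and `f''(u) ≤ a f(u) + b` for all `u ≥ 0`, then `f(t) ≤ f(0)` for every
`0 ≤ t ≤ -2 f'(0) / (a f(0) + b)`. -/
theorem descent_condition
    (f : ℝ → ℝ)
    (hf1 : ∀ u ≥ (0 : ℝ), DifferentiableAt ℝ f u)
    (hf2 : ∀ u ≥ (0 : ℝ), DifferentiableAt ℝ (deriv f) u)
    (hconv : ConvexOn ℝ (Set.Ici 0) f)
    (hfnonneg : ∀ u ≥ (0 : ℝ), 0 ≤ f u)
    (hf'0 : deriv f 0 < 0)
    (a b : ℝ) (ha : 0 ≤ a) (hb : 0 ≤ b) (hab : 0 < a * f 0 + b)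
    (hsecond : ∀ u ≥ (0 : ℝ), deriv (deriv f) u ≤ a * f u + b)
    (t : ℝ) (ht0 : 0 ≤ t) (ht : t ≤ -2 * deriv f 0 / (a * f 0 + b)) :
    f t ≤ f 0 := by
  rcases ht0.eq_or_lt with rfl | htpos
  · exact le_refl _
  by_contra hcon
  push_neg at hcon
  set c := a * f 0 + b with hc
  have hct : t * c ≤ -2 * deriv f 0 := (le_div_iff₀ hab).mp ht
  set S : Set ℝ := Icc 0 t ∩ f ⁻¹' Iic (f 0) with hS
  have hS0 : (0:ℝ) ∈ S := ⟨⟨le_rfl, ht0⟩, Set.mem_preimage.mpr (Set.mem_Iic.mpr le_rfl)⟩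
  have hScont : ContinuousOn f (Icc 0 t) :=
    fun u hu => ((hf1 u hu.1).continuousAt).continuousWithinAt
  have hSclosed : IsClosed S :=
    hScont.preimage_isClosed_of_isClosed isClosed_Icc isClosed_Iic
  have hSbdd : BddAbove S := ⟨t, fun u hu => hu.1.2⟩
  set T := sSup S with hT
  have hTS : T ∈ S := IsClosed.csSup_mem hSclosed ⟨0, hS0⟩ hSbdd
  have hT0 : 0 ≤ T := hTS.1.1
  have hTt : T < t := by
    rcases lt_or_eq_of_le hTS.1.2 with h | h
    · exact h
    · have hfT' : f T ≤ f 0 := Set.mem_Iic.mp hTS.2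
      rw [h] at hfT'
      exact absurd hfT' (not_le.mpr hcon)
  have hgt : ∀ u, T < u → u ≤ t → f 0 < f u := by
    intro u hu1 hu2
    by_contra h
    push_neg at h
    exact absurd (le_csSup hSbdd ⟨⟨hT0.trans hu1.le, hu2⟩, Set.mem_preimage.mpr (Set.mem_Iic.mpr h)⟩) (not_le.mpr hu1)
  have hfT : f 0 ≤ f T := by
    have htend : Tendsto f (𝓝[>] T) (𝓝 (f T)) :=
      ((hf1 T hT0).continuousAt.continuousWithinAt)
    refine ge_of_tendsto htend ?_
    filter_upwards [Ioo_mem_nhdsGT_of_mem ⟨le_rfl, hTt⟩] with u hu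
    exact (hgt u hu.1 hu.2.le).le
  rcases hT0.eq_or_lt with hT0' | hTpos
  · -- T = 0 : contradiction with deriv f 0 < 0
    have hd := (hf1 0 le_rfl).hasDerivAt
    rw [hasDerivAt_iff_tendsto_slope] at hd
    have hev : ∀ᶠ x in 𝓝[≠] (0:ℝ), slope f 0 x < 0 := hd.eventually_lt_const hf'0
    have hle : 𝓝[>] (0:ℝ) ≤ 𝓝[≠] 0 := nhdsWithin_mono 0 (fun x hx => ne_of_gt hx)
    obtain ⟨x, hx1, hx2⟩ :=
      ((hev.filter_mono hle).and (Ioo_mem_nhdsGT_of_mem ⟨le_rfl, htpos⟩)).exists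
    have hfx : f x < f 0 := by
      rw [slope_def_field] at hx1
      have := (div_lt_iff₀ (by linarith [hx2.1] : (0:ℝ) < x - 0)).mp hx1
      linarith
    have : x ≤ T := le_csSup hSbdd ⟨⟨hx2.1.le, hx2.2.le⟩, Set.mem_preimage.mpr (Set.mem_Iic.mpr hfx.le)⟩
    rw [← hT0'] at this
    exact absurd this (not_le.mpr hx2.1)
  · -- 0 < T
    have hleT : ∀ u ∈ Icc (0:ℝ) T, f u ≤ f 0 := by
      intro u hu
      have hw1 : 0 ≤ 1 - u / T := by
        have : u / T ≤ 1 := (div_le_one hTpos).mpr hu.2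
        linarith
      have hw2 : 0 ≤ u / T := div_nonneg hu.1 hT0
      have hsum : (1 - u/T) + u/T = 1 := by ring
      have hcv := hconv.2 (le_refl (0:ℝ)) (hT0 : T ∈ Ici (0:ℝ)) hw1 hw2 hsum
      simp only [smul_eq_mul, mul_zero, zero_add] at hcv
      rw [div_mul_cancel₀ u (ne_of_gt hTpos)] at hcv
      have hfTle : f T ≤ f 0 := Set.mem_Iic.mp hTS.2
      nlinarith [hcv, hfTle, hw2]
    have hcontd : ContinuousOn (deriv f) (Icc 0 T) :=
      fun u hu => ((hf2 u hu.1).continuousAt).continuousWithinAt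
    have hderivA : ∀ u ∈ Icc (0:ℝ) T, deriv f u ≤ deriv f 0 + c * u := by
      have hdd : ∀ u ∈ Ioo (0:ℝ) T, HasDerivAt (fun u => deriv f u - c * u) (deriv (deriv f) u - c) u :=
        fun u hu => ((hf2 u hu.1.le).hasDerivAt).sub (by simpa using (hasDerivAt_id u).const_mul c)
      have hanti : AntitoneOn (fun u => deriv f u - c * u) (Icc 0 T) := by
        refine antitoneOn_of_deriv_nonpos (convex_Icc 0 T) ?_ ?_ ?_
        · exact hcontd.sub ((continuous_const.mul continuous_id).continuousOn)
        · intro u hu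
          rw [interior_Icc] at hu
          exact (hdd u hu).differentiableAt.differentiableWithinAt
        · intro u hu
          rw [interior_Icc] at hu
          rw [(hdd u hu).deriv]
          have h2 := hsecond u hu.1.le
          have hfu := hleT u ⟨hu.1.le, hu.2.le⟩
          nlinarith
      intro u hu
      have := hanti (left_mem_Icc.mpr hT0) hu hu.1
      simp only [mul_zero, sub_zero] at this
      linarith
    have hddB : ∀ u ∈ Ioo (0:ℝ) T, HasDerivAt (fun u => f u - (deriv f 0 * u + c/2 * u^2))
        (deriv f u - (deriv f 0 + c * u)) u := by
      intro u hu
      have h1 : HasDerivAt (fun u : ℝ => deriv f 0 * u + c/2 * u^2)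
          (deriv f 0 + c * u) u := by
        have ha1 : HasDerivAt (fun u : ℝ => deriv f 0 * u) (deriv f 0) u := by
          simpa using (hasDerivAt_id u).const_mul (deriv f 0)
        have ha2 : HasDerivAt (fun u : ℝ => c/2 * u^2) (c * u) u := by
          have := (hasDerivAt_pow 2 u).const_mul (c/2)
          simpa using this.congr_deriv (by ring)
        exact ha1.add ha2
      exact ((hf1 u hu.1.le).hasDerivAt).sub h1
    have hantiB : AntitoneOn (fun u => f u - (deriv f 0 * u + c/2 * u^2)) (Icc 0 T) := by
      refine antitoneOn_of_deriv_nonpos (convex_Icc 0 T) ?_ ?_ ?_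
      · refine (hScont.mono ?_).sub (Continuous.continuousOn (by continuity))
        exact Icc_subset_Icc le_rfl hTt.le
      · intro u hu
        rw [interior_Icc] at hu
        exact (hddB u hu).differentiableAt.differentiableWithinAt
      · intro u hu
        rw [interior_Icc] at hu
        rw [(hddB u hu).deriv]
        have := hderivA u ⟨hu.1.le, hu.2.le⟩
        linarith
    have hB := hantiB (left_mem_Icc.mpr hT0) (right_mem_Icc.mpr hT0) hT0
    simp only [mul_zero, zero_pow, ne_eq, OfNat.ofNat_ne_zero, not_false_eq_true,
      add_zero, sub_zero] at hB
    -- hB : f T - (deriv f 0 * T + c/2 * T^2) ≤ f 0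
    nlinarith [hB, hfT, hct, mul_lt_mul_of_pos_left hTt hab, mul_le_mul_of_nonneg_right hct hT0, hTpos, hab]
end

section
/- Let C be a symmetric positive definite n×n real matrix, D a symmetric n×n real matrix, and define f : ℝ → ℝ by f(t) = tr(exp(t·D)·C) + tr(exp(−t·D)·C⁻¹) − 2n. Then for every integer m ≥ 1 and every t ∈ ℝ, the derivative of even order 2m satisfies f^(2m)(t) ≤ ‖D‖_∞^(2m) · f(t) + 2·tr(D^(2m)), where ‖D‖_∞ is the spectral norm of D. -/
open Matrix

/-- The spectral norm of a real symmetric matrix: the maximum absolute value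
of its eigenvalues. -/
noncomputable def specNormInf {n : ℕ} {D : Matrix (Fin n) (Fin n) ℝ}
    (hD : D.IsHermitian) : ℝ :=
  ⨆ i, |hD.eigenvalues i|

/-!
Diagonalize `D = U diag(μ) Uᵀ` and put `P = Uᵀ C U`, so that `Uᵀ C⁻¹ U = P⁻¹`. Then
`f t = ∑ i, (xᵢ + yᵢ - 2)` with `xᵢ = Pᵢᵢ exp (μᵢ t)` and `yᵢ = (P⁻¹)ᵢᵢ exp (-μᵢ t)`, and
`f⁽²ᵐ⁾ t = ∑ i, μᵢ^(2m) (xᵢ + yᵢ)`. Cauchy–Schwarz for the inner product defined by `P` gives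
`xᵢ yᵢ = Pᵢᵢ (P⁻¹)ᵢᵢ ≥ 1`, so `xᵢ + yᵢ ≥ 2` and
`μᵢ^(2m) (xᵢ + yᵢ) ≤ ‖D‖^(2m) (xᵢ + yᵢ - 2) + 2 μᵢ^(2m)`. Summing over `i` gives the bound,
as `tr D^(2m) = ∑ i, μᵢ^(2m)`.
-/

open Real

namespace Matrix

variable {ι 𝕜 : Type*} [Fintype ι] [DecidableEq ι] [RCLike 𝕜]

lemma IsHermitian.trace_cfc_mul {A : Matrix ι ι 𝕜} (hA : A.IsHermitian) (g : ℝ → ℝ)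
    (N : Matrix ι ι 𝕜) :
    (cfc g A * N).trace = ∑ i, (g (hA.eigenvalues i) : 𝕜) *
      (star (hA.eigenvectorUnitary : Matrix ι ι 𝕜) * N * hA.eigenvectorUnitary) i i := by
  rw [hA.cfc_eq, IsHermitian.cfc, Unitary.conjStarAlgAut_apply, mul_assoc, mul_assoc,
    trace_mul_comm, mul_assoc]
  simp only [trace, diag_apply, diagonal_mul, Function.comp_apply]

lemma IsHermitian.trace_pow {A : Matrix ι ι 𝕜} (hA : A.IsHermitian) (k : ℕ) :
    (A ^ k).trace = ∑ i, (hA.eigenvalues i : 𝕜) ^ k := by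
  rw [← cfc_pow_id (R := ℝ) A k hA.isSelfAdjoint, ← mul_one (cfc _ A), hA.trace_cfc_mul]
  simp

-- Any normed algebra structure will do: `NormedSpace.exp` depends only on the topology.
open scoped Matrix.Norms.L2Operator in
lemma IsHermitian.exp_smul_eq_cfc {A : Matrix ι ι ℝ} (hA : A.IsHermitian) (t : ℝ) :
    NormedSpace.exp (t • A) = cfc (fun x ↦ Real.exp (t * x)) A := by
  rw [cfc_comp_const_mul t Real.exp A (ha := hA.isSelfAdjoint)]
  exact (CFC.real_exp_eq_normedSpace_exp (.smul (IsSelfAdjoint.all t) hA.isSelfAdjoint)).symm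

lemma IsHermitian.trace_exp_smul_mul {A : Matrix ι ι ℝ} (hA : A.IsHermitian) (t : ℝ)
    (N : Matrix ι ι ℝ) :
    (NormedSpace.exp (t • A) * N).trace = ∑ i,
      (star (hA.eigenvectorUnitary : Matrix ι ι ℝ) * N * hA.eigenvectorUnitary) i i *
        Real.exp (hA.eigenvalues i * t) := by
  rw [hA.exp_smul_eq_cfc, hA.trace_cfc_mul]
  simp only [RCLike.ofReal_real_eq_id, id, mul_comm]

lemma PosDef.one_le_diag_mul_inv_diag {P : Matrix ι ι ℝ} (hP : P.PosDef) (i : ι) :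
    1 ≤ P i i * P⁻¹ i i := by
  set e : ι → ℝ := Pi.single i 1
  set y := P⁻¹ *ᵥ e
  have hPy : P *ᵥ y = e := by
    rw [mulVec_mulVec, mul_nonsing_inv P ((isUnit_iff_isUnit_det P).mp hP.isUnit), one_mulVec]
  have hee : e ⬝ᵥ e = 1 := by simp [e]
  have hyPe : y ⬝ᵥ (P *ᵥ e) = 1 := by
    have hPT : Pᵀ = P := by simpa using hP.isHermitian.eq
    rw [dotProduct_mulVec, ← mulVec_transpose, hPT, hPy, hee]
  have hye : y ⬝ᵥ e = P⁻¹ i i := by simp [y, e]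
  have hePe : e ⬝ᵥ (P *ᵥ e) = P i i := by simp [e]
  have hquad (s : ℝ) : 0 ≤ P⁻¹ i i * (s * s) + 2 * s + P i i := by
    have h := hP.posSemidef.dotProduct_mulVec_nonneg (e + s • y)
    simp only [star_trivial, mulVec_add, mulVec_smul, hPy, add_dotProduct, dotProduct_add,
      smul_dotProduct, dotProduct_smul, smul_eq_mul, hyPe, hye, hePe, hee] at h
    linarith
  have := discrim_le_zero hquad
  rw [discrim] at this
  linarith

end Matrix

lemma abs_eigenvalues_le_specNormInf {n : ℕ} {D : Matrix (Fin n) (Fin n) ℝ}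
    (hD : D.IsHermitian) (i : Fin n) : |hD.eigenvalues i| ≤ specNormInf hD :=
  le_ciSup (f := fun j ↦ |hD.eigenvalues j|) (Set.finite_range _).bddAbove i

lemma mul_add_le_of_one_le_mul {x y l L : ℝ} (hx : 0 < x) (hy : 0 < y) (hxy : 1 ≤ x * y)
    (hl : l ≤ L) : l * (x + y) ≤ L * (x + y - 2) + 2 * l := by
  have : 2 ≤ x + y := by nlinarith [sq_nonneg (x - y)]
  nlinarith

lemma iteratedDeriv_exp_add_exp_neg (a b c : ℝ) (k : ℕ) :
    iteratedDeriv k (fun t ↦ a * exp (c * t) + b * exp (-c * t)) =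
      fun t ↦ c ^ k * a * exp (c * t) + (-c) ^ k * b * exp (-c * t) := by
  funext t
  rw [iteratedDeriv_fun_add (by fun_prop) (by fun_prop), iteratedDeriv_const_mul_field,
    iteratedDeriv_const_mul_field, iteratedDeriv_exp_const_mul, iteratedDeriv_exp_const_mul]
  ring

section diagDivergence

variable {ι : Type*} [Fintype ι] (μ a b : ι → ℝ)

noncomputable def diagDivergence (t : ℝ) : ℝ :=
  ∑ i, (a i * exp (μ i * t) + b i * exp (-μ i * t) - 2)

lemma iteratedDeriv_diagDivergence {k : ℕ} (hk : k ≠ 0) (t : ℝ) :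
    iteratedDeriv k (diagDivergence μ a b) t =
      ∑ i, (μ i ^ k * a i * exp (μ i * t) + (-μ i) ^ k * b i * exp (-μ i * t)) := by
  unfold diagDivergence
  rw [iteratedDeriv_fun_sum fun i _ ↦ by fun_prop]
  refine Finset.sum_congr rfl fun i _ ↦ ?_
  rw [iteratedDeriv_fun_sub (by fun_prop) (by fun_prop), iteratedDeriv_exp_add_exp_neg,
    iteratedDeriv_const, if_neg hk, sub_zero]

variable {μ a b}

theorem iteratedDeriv_two_mul_diagDivergence_le (ha : ∀ i, 0 < a i) (hb : ∀ i, 0 < b i)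
    (hab : ∀ i, 1 ≤ a i * b i) {L : ℝ} (hμ : ∀ i, |μ i| ≤ L) {m : ℕ} (hm : m ≠ 0) (t : ℝ) :
    iteratedDeriv (2 * m) (diagDivergence μ a b) t ≤
      L ^ (2 * m) * diagDivergence μ a b t + 2 * ∑ i, μ i ^ (2 * m) := by
  rw [iteratedDeriv_diagDivergence μ a b (by omega), diagDivergence, Finset.mul_sum,
    Finset.mul_sum, ← Finset.sum_add_distrib]
  refine Finset.sum_le_sum fun i _ ↦ ?_
  have hx : 0 < a i * exp (μ i * t) := mul_pos (ha i) (exp_pos _)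
  have hy : 0 < b i * exp (-μ i * t) := mul_pos (hb i) (exp_pos _)
  have hxy : 1 ≤ a i * exp (μ i * t) * (b i * exp (-μ i * t)) := by
    rw [mul_mul_mul_comm, ← exp_add, neg_mul, add_neg_cancel, exp_zero, mul_one]
    exact hab i
  have hpow : μ i ^ (2 * m) ≤ L ^ (2 * m) := by
    rw [← (even_two_mul m).pow_abs]
    exact pow_le_pow_left₀ (abs_nonneg _) (hμ i) _
  have := mul_add_le_of_one_le_mul hx hy hxy hpow
  rw [(even_two_mul m).neg_pow]
  linarith

end diagDivergence

theorem iteratedDeriv_even_le_general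
    (n : ℕ) (C D : Matrix (Fin n) (Fin n) ℝ)
    (hC : C.PosDef) (hD : D.IsHermitian)
    (f : ℝ → ℝ)
    (hf : ∀ t : ℝ, f t =
      (NormedSpace.exp (t • D) * C).trace +
        (NormedSpace.exp ((-t) • D) * C⁻¹).trace - 2 * n)
    (m : ℕ) (hm : 1 ≤ m) (t : ℝ) :
    iteratedDeriv (2 * m) f t ≤
      (specNormInf hD) ^ (2 * m) * f t + 2 * (D ^ (2 * m)).trace := by
  set U : Matrix (Fin n) (Fin n) ℝ := ↑hD.eigenvectorUnitary
  set P := star U * C * U with hP_def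
  have hP : P.PosDef := (IsUnit.posDef_star_left_conjugate_iff Unitary.isUnit_coe).mpr hC
  have hP_inv : P⁻¹ = star U * C⁻¹ * U := by
    rw [Matrix.mul_inv_rev, Matrix.mul_inv_rev, mul_assoc,
      inv_eq_left_inv (Unitary.star_mul_self_of_mem hD.eigenvectorUnitary.2),
      inv_eq_left_inv (Unitary.mul_star_self_of_mem hD.eigenvectorUnitary.2)]
  have hf_eq : f = diagDivergence hD.eigenvalues P.diag P⁻¹.diag := by
    funext s
    rw [hf, hD.trace_exp_smul_mul, hD.trace_exp_smul_mul, ← hP_def, ← hP_inv, diagDivergence]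
    simp only [diag, Finset.sum_sub_distrib, Finset.sum_add_distrib, Finset.sum_const,
      Finset.card_univ, Fintype.card_fin, nsmul_eq_mul, mul_neg, neg_mul]
    ring
  rw [hf_eq, hD.trace_pow]
  exact iteratedDeriv_two_mul_diagDivergence_le (fun _ ↦ hP.diag_pos) (fun _ ↦ hP.inv.diag_pos)
    hP.one_le_diag_mul_inv_diag (abs_eigenvalues_le_specNormInf hD) (by omega) t

/-- Even-order derivative bound for the divergence along a geodesic: with
`f t = tr (exp (t D) C) + tr (exp (-t D) C⁻¹) - 2n` for symmetric positive
definite `C` and symmetric `D`, for every `m ≥ 1` one has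
`f⁽²ᵐ⁾(t) ≤ ‖D‖_∞^(2m) f(t) + 2 tr (D^(2m))`. -/
theorem iteratedDeriv_even_le
    (n : ℕ) (hn : 1 ≤ n) (C D : Matrix (Fin n) (Fin n) ℝ)
    (hC : C.PosDef) (hD : D.IsHermitian)
    (f : ℝ → ℝ)
    (hf : ∀ t : ℝ, f t =
      (NormedSpace.exp (t • D) * C).trace +
        (NormedSpace.exp ((-t) • D) * C⁻¹).trace - 2 * n)
    (m : ℕ) (hm : 1 ≤ m) (t : ℝ) :
    iteratedDeriv (2 * m) f t ≤
      (specNormInf hD) ^ (2 * m) * f t + 2 * (D ^ (2 * m)).trace :=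
  iteratedDeriv_even_le_general n C D hC hD f hf m hm t
end

section
/- Fix a linear subspace L of the space of symmetric n×n real matrices with orthogonal complement L^⊥ relative to the trace inner product ⟨A,B⟩ = tr(A·B), symmetric matrices X₀, S₀, and μ > 0. Let W and Ŵ be symmetric positive definite with Ŵ ∈ (1/√μ)·X₀ + L and Ŵ⁻¹ ∈ (1/√μ)·S₀ + L^⊥. Let D be symmetric with W^(1/2)·(I + D)·W^(1/2) ∈ (1/√μ)·X₀ + L and W^(-1/2)·(I − D)·W^(-1/2) ∈ (1/√μ)·S₀ + L^⊥, and suppose D = D₁ − D₂ where D₁ and D₂ are symmetric, D₂ ∈ L_W := {W^(-1/2)·Z·W^(-1/2) : Z ∈ L}, and tr(D₁·M) = 0 for every M ∈ L_W. Then, with h := tr(W·Ŵ⁻¹) + tr(W⁻¹·Ŵ) − 2n: (a) h·(1 + ‖D₁ + D₂‖_∞) ≥ tr(D²), and (b) if ‖D₁ + D₂‖_∞ < 1 then h·(1 − ‖D₁ + D₂‖_∞) ≤ tr(D²). -/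
/-!
Write `V = W^(1/2)`, `P = V⁻¹ Ŵ V⁻¹` and `Q = V Ŵ⁻¹ V = P⁻¹`. The defects `G = P - (1 + D)` and
`H = Q - (1 - D)` lie in `V⁻¹ L V⁻¹` and `V L^⊥ V`, so `G ⊥ H`, `G ⊥ D₁` and `H ⊥ D₂` for the
trace inner product. Taking the trace of `(1 + D + G) (1 - D + H) = P Q = 1` therefore gives
`tr D² = tr (G + H) + tr ((D₁ + D₂) (G + H))`, where `G + H = P + P⁻¹ - 2 = (P - 1) P⁻¹ (P - 1)`
is positive semidefinite with trace `h`. Since `-‖E‖ ≤ E ≤ ‖E‖` in the Loewner order, the last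
term is at most `‖D₁ + D₂‖_∞ h` in absolute value, which gives both bounds.
-/

open Matrix

/-- The positive semidefinite square root of a positive semidefinite matrix
(the definition of `Matrix.PosSemidef.sqrt` in the older Mathlib, which no longer exists). -/
noncomputable def posSemidefSqrt {n : ℕ} {A : Matrix (Fin n) (Fin n) ℝ} (hA : A.PosSemidef) :
    Matrix (Fin n) (Fin n) ℝ :=
  hA.isHermitian.eigenvectorUnitary.1 * diagonal ((↑) ∘ (√·) ∘ hA.isHermitian.eigenvalues) *
    (star hA.isHermitian.eigenvectorUnitary : Matrix (Fin n) (Fin n) ℝ)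

section MatrixOrder

open scoped MatrixOrder

lemma posSemidefSqrt_eq_sqrt {n : ℕ} {A : Matrix (Fin n) (Fin n) ℝ} (hA : A.PosSemidef) :
    posSemidefSqrt hA = CFC.sqrt A := by
  rw [CFC.sqrt_eq_cfc, cfc_nnreal_eq_real _ A, hA.1.cfc_eq]
  simp [IsHermitian.cfc, posSemidefSqrt, Unitary.conjStarAlgAut_apply, Function.comp_def,
    hA.eigenvalues_nonneg]

lemma posSemidef_posSemidefSqrt {n : ℕ} {A : Matrix (Fin n) (Fin n) ℝ} (hA : A.PosSemidef) :
    (posSemidefSqrt hA).PosSemidef :=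
  (posSemidefSqrt_eq_sqrt hA ▸ CFC.sqrt_nonneg A).posSemidef

lemma posSemidefSqrt_mul_self {n : ℕ} {A : Matrix (Fin n) (Fin n) ℝ} (hA : A.PosSemidef) :
    posSemidefSqrt hA * posSemidefSqrt hA = A := by
  rw [posSemidefSqrt_eq_sqrt]
  exact CFC.sqrt_mul_sqrt_self A hA.nonneg

lemma Matrix.PosSemidef.trace_mul_nonneg {ι : Type*} [Fintype ι] [DecidableEq ι]
    {A B : Matrix ι ι ℝ} (hA : A.PosSemidef) (hB : B.PosSemidef) : 0 ≤ (A * B).trace := by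
  have hR : (CFC.sqrt A)ᴴ = CFC.sqrt A := (CFC.sqrt_nonneg A).posSemidef.isHermitian
  have := (hB.conjTranspose_mul_mul_same (CFC.sqrt A)).trace_nonneg
  rwa [hR, trace_mul_cycle, CFC.sqrt_mul_sqrt_self A hA.nonneg] at this

lemma trace_algebraMap_mul {ι : Type*} [Fintype ι] [DecidableEq ι] (c : ℝ) (M : Matrix ι ι ℝ) :
    (algebraMap ℝ (Matrix ι ι ℝ) c * M).trace = c * M.trace := by
  rw [Algebra.algebraMap_eq_smul_one, smul_mul_assoc, Matrix.one_mul, trace_smul, smul_eq_mul]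

lemma abs_eigenvalues_le_specNormInf_s17 {n : ℕ} {E : Matrix (Fin n) (Fin n) ℝ}
    (hE : E.IsHermitian) (i : Fin n) : |hE.eigenvalues i| ≤ specNormInf hE :=
  le_ciSup (f := fun i => |hE.eigenvalues i|) (Set.finite_range _).bddAbove i

lemma Matrix.IsHermitian.abs_trace_mul_le_specNormInf_mul_trace {n : ℕ}
    {E M : Matrix (Fin n) (Fin n) ℝ} (hE : E.IsHermitian) (hM : M.PosSemidef) :
    |(E * M).trace| ≤ specNormInf hE * M.trace := by
  have hspec : ∀ x ∈ spectrum ℝ E, |x| ≤ specNormInf hE := by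
    rw [hE.spectrum_real_eq_range_eigenvalues]
    rintro - ⟨i, rfl⟩
    exact abs_eigenvalues_le_specNormInf_s17 hE i
  have hupper : E ≤ algebraMap ℝ _ (specNormInf hE) :=
    le_algebraMap_of_spectrum_le (fun x hx => (le_abs_self x).trans (hspec x hx)) hE
  have hlower : algebraMap ℝ _ (-specNormInf hE) ≤ E :=
    algebraMap_le_of_le_spectrum (fun x hx => neg_le_of_abs_le (hspec x hx)) hE
  have h₁ := (Matrix.le_iff.1 hupper).trace_mul_nonneg hM
  have h₂ := (Matrix.le_iff.1 hlower).trace_mul_nonneg hM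
  rw [Matrix.sub_mul, trace_sub, trace_algebraMap_mul] at h₁ h₂
  rw [abs_le]
  constructor <;> linarith

end MatrixOrder

lemma Matrix.PosSemidef.add_sub_two_of_mul_eq_one {ι : Type*} [Fintype ι] [DecidableEq ι]
    {P Q : Matrix ι ι ℝ} (hP : P.PosSemidef) (hPQ : P * Q = 1) : (P + Q - 2).PosSemidef := by
  have hQ : Q = P⁻¹ := (inv_eq_right_inv hPQ).symm
  have hQP : Q * P = 1 := mul_eq_one_comm.1 hPQ
  have hsq : (P - 1)ᴴ * P⁻¹ * (P - 1) = P + Q - 2 := by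
    rw [conjTranspose_sub, hP.isHermitian.eq, conjTranspose_one, ← hQ]
    simp only [Matrix.sub_mul, Matrix.mul_sub, Matrix.mul_one, Matrix.one_mul, hQP, hPQ]
    rw [← one_add_one_eq_two]
    abel
  exact hsq ▸ hP.inv.conjTranspose_mul_mul_same (P - 1)

section Newton

variable {ι K : Type*} [Fintype ι] [DecidableEq ι] [CommRing K]

lemma trace_mul_self_eq_of_mul_eq_one {D₁ D₂ G H : Matrix ι ι K}
    (hGD₁ : (G * D₁).trace = 0) (hHD₂ : (H * D₂).trace = 0) (hGH : (G * H).trace = 0)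
    (hmul : (1 + (D₁ - D₂) + G) * (1 - (D₁ - D₂) + H) = 1) :
    ((D₁ - D₂) * (D₁ - D₂)).trace = (G + H).trace + ((D₁ + D₂) * (G + H)).trace := by
  have hsq : (D₁ - D₂) * (D₁ - D₂) = G + H + (D₁ - D₂) * H - G * (D₁ - D₂) + G * H := by
    have h : (D₁ - D₂) * (D₁ - D₂) = G + H + (D₁ - D₂) * H - G * (D₁ - D₂) + G * H
        + (1 - (1 + (D₁ - D₂) + G) * (1 - (D₁ - D₂) + H)) := by noncomm_ring
    rwa [hmul, sub_self, add_zero] at h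
  rw [hsq]
  simp only [Matrix.mul_add, Matrix.add_mul, Matrix.mul_sub, Matrix.sub_mul, trace_add, trace_sub]
  rw [trace_mul_comm D₁ G, trace_mul_comm D₂ H, trace_mul_comm D₂ G, hGD₁, hHD₂, hGH]
  ring

variable {V : Matrix ι ι K}

lemma inv_mul_sub_mul_mul_mul_inv (hV : IsUnit V.det) (C B : Matrix ι ι K) :
    V⁻¹ * (C - V * B * V) * V⁻¹ = V⁻¹ * C * V⁻¹ - B := by
  rw [Matrix.mul_sub, Matrix.sub_mul, Matrix.mul_assoc V, nonsing_inv_mul_cancel_left _ _ hV,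
    mul_nonsing_inv_cancel_right _ _ hV]

lemma mul_sub_inv_mul_mul_inv_mul (hV : IsUnit V.det) (C B : Matrix ι ι K) :
    V * (C - V⁻¹ * B * V⁻¹) * V = V * C * V - B := by
  simpa only [nonsing_inv_nonsing_inv V hV] using
    inv_mul_sub_mul_mul_mul_inv (isUnit_nonsing_inv_det V hV) C B

lemma trace_inv_mul_mul_inv_mul (hV : IsUnit V.det) (Z B : Matrix ι ι K) :
    ((V⁻¹ * Z * V⁻¹) * (V * B * V)).trace = (Z * B).trace := by
  have h : (V⁻¹ * Z * V⁻¹) * (V * B * V) = V⁻¹ * (Z * B * V) := by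
    simp only [Matrix.mul_assoc, nonsing_inv_mul_cancel_left _ _ hV]
  rw [h, trace_mul_comm, mul_nonsing_inv_cancel_right _ _ hV]

lemma inv_mul_mul_inv_mul_mul_inv_mul {C : Matrix ι ι K} (hV : IsUnit V.det)
    (hC : IsUnit C.det) : (V⁻¹ * C * V⁻¹) * (V * C⁻¹ * V) = 1 := by
  simp only [Matrix.mul_assoc, nonsing_inv_mul_cancel_left _ _ hV,
    mul_nonsing_inv_cancel_left _ _ hC, nonsing_inv_mul _ hV]

theorem trace_mul_self_eq_of_newton {L Lp : Submodule K (Matrix ι ι K)}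
    (hLLp : ∀ A ∈ L, ∀ B ∈ Lp, (A * B).trace = 0) {C X S D₁ D₂ : Matrix ι ι K}
    (hV : IsUnit V.det) (hC : IsUnit C.det) (hCX : C - X ∈ L) (hCS : C⁻¹ - S ∈ Lp)
    (hDX : V * (1 + (D₁ - D₂)) * V - X ∈ L) (hDS : V⁻¹ * (1 - (D₁ - D₂)) * V⁻¹ - S ∈ Lp)
    (hD₂ : ∃ Z ∈ L, D₂ = V⁻¹ * Z * V⁻¹) (hD₁ : ∀ Z ∈ L, (D₁ * (V⁻¹ * Z * V⁻¹)).trace = 0) :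
    ((D₁ - D₂) * (D₁ - D₂)).trace =
      (V⁻¹ * C * V⁻¹ + V * C⁻¹ * V - 2).trace +
        ((D₁ + D₂) * (V⁻¹ * C * V⁻¹ + V * C⁻¹ * V - 2)).trace := by
  obtain ⟨Z, hZ, hD₂⟩ := hD₂
  have hG : C - V * (1 + (D₁ - D₂)) * V ∈ L := sub_sub_sub_cancel_right C _ X ▸ sub_mem hCX hDX
  have hH : C⁻¹ - V⁻¹ * (1 - (D₁ - D₂)) * V⁻¹ ∈ Lp :=
    sub_sub_sub_cancel_right _ _ S ▸ sub_mem hCS hDS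
  have key := trace_mul_self_eq_of_mul_eq_one (D₁ := D₁) (D₂ := D₂)
    (G := V⁻¹ * (C - V * (1 + (D₁ - D₂)) * V) * V⁻¹)
    (H := V * (C⁻¹ - V⁻¹ * (1 - (D₁ - D₂)) * V⁻¹) * V)
    (by rw [trace_mul_comm]; exact hD₁ _ hG)
    (by rw [trace_mul_comm, hD₂, trace_inv_mul_mul_inv_mul hV, ← hD₂]; exact hLLp _ hZ _ hH)
    (by rw [trace_inv_mul_mul_inv_mul hV]; exact hLLp _ hG _ hH)
    (by rw [inv_mul_sub_mul_mul_mul_inv hV, mul_sub_inv_mul_mul_inv_mul hV, add_sub_cancel,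
      add_sub_cancel, inv_mul_mul_inv_mul_mul_inv_mul hV hC])
  rwa [inv_mul_sub_mul_mul_mul_inv hV, mul_sub_inv_mul_mul_inv_mul hV,
    sub_add_sub_comm, add_add_sub_cancel, one_add_one_eq_two] at key

end Newton

theorem divergence_bounds_from_newton_direction_general
    (n : ℕ)
    (L : Submodule ℝ (Matrix (Fin n) (Fin n) ℝ))
    (Lp : Submodule ℝ (Matrix (Fin n) (Fin n) ℝ))
    (hLp : ∀ B, B ∈ Lp ↔ (B.IsHermitian ∧ ∀ A ∈ L, (A * B).trace = 0))
    (X₀ S₀ : Matrix (Fin n) (Fin n) ℝ)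
    (μ : ℝ)
    (W Wc : Matrix (Fin n) (Fin n) ℝ) (hW : W.PosDef) (hWc : Wc.PosDef)
    (hWc1 : Wc - (1 / Real.sqrt μ) • X₀ ∈ L)
    (hWc2 : Wc⁻¹ - (1 / Real.sqrt μ) • S₀ ∈ Lp)
    (D : Matrix (Fin n) (Fin n) ℝ)
    (hD1' : posSemidefSqrt hW.posSemidef * (1 + D) * posSemidefSqrt hW.posSemidef
            - (1 / Real.sqrt μ) • X₀ ∈ L)
    (hD2' : (posSemidefSqrt hW.posSemidef)⁻¹ * (1 - D) * (posSemidefSqrt hW.posSemidef)⁻¹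
            - (1 / Real.sqrt μ) • S₀ ∈ Lp)
    (D₁ D₂ : Matrix (Fin n) (Fin n) ℝ)
    (hD₁ : D₁.IsHermitian) (hD₂ : D₂.IsHermitian)
    (hsum : D = D₁ - D₂)
    (hD₂mem : ∃ Z ∈ L, D₂ = (posSemidefSqrt hW.posSemidef)⁻¹ * Z * (posSemidefSqrt hW.posSemidef)⁻¹)
    (hD₁orth : ∀ Z ∈ L,
      (D₁ * ((posSemidefSqrt hW.posSemidef)⁻¹ * Z * (posSemidefSqrt hW.posSemidef)⁻¹)).trace = 0)
    (h : ℝ)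
    (hh : h = (W * Wc⁻¹).trace + (W⁻¹ * Wc).trace - 2 * n) :
    h * (1 + specNormInf (hD₁.add hD₂)) ≥ (D * D).trace ∧
      (specNormInf (hD₁.add hD₂) < 1 →
        h * (1 - specNormInf (hD₁.add hD₂)) ≤ (D * D).trace) := by
  subst hsum
  set V := posSemidefSqrt hW.posSemidef
  have hVV : V * V = W := posSemidefSqrt_mul_self hW.posSemidef
  have hV : IsUnit V.det := isUnit_det_of_right_inverse (B := V * W⁻¹) <| by
    rw [← Matrix.mul_assoc, hVV, mul_nonsing_inv _ ((isUnit_iff_isUnit_det W).1 hW.isUnit)]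
  have hC : IsUnit Wc.det := (isUnit_iff_isUnit_det Wc).1 hWc.isUnit
  set M := V⁻¹ * Wc * V⁻¹ + V * Wc⁻¹ * V - 2
  have hsplit : ((D₁ - D₂) * (D₁ - D₂)).trace = M.trace + ((D₁ + D₂) * M).trace :=
    trace_mul_self_eq_of_newton (fun A hA B hB => ((hLp B).1 hB).2 A hA) hV hC hWc1 hWc2
      hD1' hD2' hD₂mem hD₁orth
  have hM : M.PosSemidef := by
    refine PosSemidef.add_sub_two_of_mul_eq_one ?_ (inv_mul_mul_inv_mul_mul_inv_mul hV hC)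
    have hVinv : (V⁻¹)ᴴ = V⁻¹ := (posSemidef_posSemidefSqrt hW.posSemidef).isHermitian.inv
    simpa only [hVinv] using hWc.posSemidef.conjTranspose_mul_mul_same V⁻¹
  have hMh : M.trace = h := by
    rw [hh, trace_sub, trace_add, trace_mul_cycle, ← Matrix.mul_inv_rev, hVV, trace_mul_cycle,
      hVV, ← one_add_one_eq_two, trace_add, trace_one, Fintype.card_fin]
    ring
  obtain ⟨hlower, hupper⟩ :=
    abs_le.1 ((hD₁.add hD₂).abs_trace_mul_le_specNormInf_mul_trace hM)
  rw [hMh] at hlower hupper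
  rw [hsplit, hMh]
  exact ⟨by linarith, fun _ => by linarith⟩

/-- Computable divergence bounds from the Newton direction: with `D = D₁ - D₂`
the orthogonal decomposition of the Newton direction at `(W, μ)` relative to
`L_W = {W^(-1/2) Z W^(-1/2) : Z ∈ L}`, `Wc` the scaled centered point, and
`h = tr (W Wc⁻¹) + tr (W⁻¹ Wc) - 2n` the divergence, one has
(a) `h (1 + ‖D₁ + D₂‖_∞) ≥ tr (D²)`, and
(b) if `‖D₁ + D₂‖_∞ < 1` then `h (1 - ‖D₁ + D₂‖_∞) ≤ tr (D²)`. -/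
theorem divergence_bounds_from_newton_direction
    (n : ℕ) (hn : 1 ≤ n)
    (L : Submodule ℝ (Matrix (Fin n) (Fin n) ℝ))
    (hL : ∀ A ∈ L, A.IsHermitian)
    (Lp : Submodule ℝ (Matrix (Fin n) (Fin n) ℝ))
    (hLp : ∀ B, B ∈ Lp ↔ (B.IsHermitian ∧ ∀ A ∈ L, (A * B).trace = 0))
    (X₀ S₀ : Matrix (Fin n) (Fin n) ℝ) (hX₀ : X₀.IsHermitian) (hS₀ : S₀.IsHermitian)
    (μ : ℝ) (hμ : 0 < μ)
    (W Wc : Matrix (Fin n) (Fin n) ℝ) (hW : W.PosDef) (hWc : Wc.PosDef)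
    (hWc1 : Wc - (1 / Real.sqrt μ) • X₀ ∈ L)
    (hWc2 : Wc⁻¹ - (1 / Real.sqrt μ) • S₀ ∈ Lp)
    (D : Matrix (Fin n) (Fin n) ℝ) (hD : D.IsHermitian)
    (hD1' : posSemidefSqrt hW.posSemidef * (1 + D) * posSemidefSqrt hW.posSemidef
            - (1 / Real.sqrt μ) • X₀ ∈ L)
    (hD2' : (posSemidefSqrt hW.posSemidef)⁻¹ * (1 - D) * (posSemidefSqrt hW.posSemidef)⁻¹
            - (1 / Real.sqrt μ) • S₀ ∈ Lp)
    (D₁ D₂ : Matrix (Fin n) (Fin n) ℝ)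
    (hD₁ : D₁.IsHermitian) (hD₂ : D₂.IsHermitian)
    (hsum : D = D₁ - D₂)
    (hD₂mem : ∃ Z ∈ L, D₂ = (posSemidefSqrt hW.posSemidef)⁻¹ * Z * (posSemidefSqrt hW.posSemidef)⁻¹)
    (hD₁orth : ∀ Z ∈ L,
      (D₁ * ((posSemidefSqrt hW.posSemidef)⁻¹ * Z * (posSemidefSqrt hW.posSemidef)⁻¹)).trace = 0)
    (h : ℝ)
    (hh : h = (W * Wc⁻¹).trace + (W⁻¹ * Wc).trace - 2 * n) :
    h * (1 + specNormInf (hD₁.add hD₂)) ≥ (D * D).trace ∧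
      (specNormInf (hD₁.add hD₂) < 1 →
        h * (1 - specNormInf (hD₁.add hD₂)) ≤ (D * D).trace) :=
  divergence_bounds_from_newton_direction_general n L Lp hLp X₀ S₀ μ W Wc hW hWc hWc1 hWc2 D hD1'
    hD2' D₁ D₂ hD₁ hD₂ hsum hD₂mem hD₁orth h hh
end
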